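/- Let m be a nonnegative smooth solution on (0,T)×T^d of ∂_t m − νΔm + (1/ε)1_A m − (1/ε)(1_A m)(t, x−ξ) = 0, where A ⊂ (0,T)×T^d is measurable, ξ ∈ T^d and ε > 0. Let k : T^d → ℝ with k ≥ 0 on A, and let u ∈ L²((0,T),H¹(T^d)) with ∂_t u ∈ L²((0,T),H⁻¹) satisfy u(t,x) ≤ k(x) + u(t, x+ξ) almost everywhere on A. Then ∫₀ᵀ∫_{T^d} (∂_t m − νΔm) u dx dt + (1/ε)∫_A k m dx dt ≥ 0. -/

import Mathlib

/-!
By the equation, the first integral is `(1/ε) ∫ (g(·-ξ) - g) u` with `g = 1_A m`. If `g u` were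
integrable, the translation `e : x ↦ x + ξ` would turn it into `(1/ε) ∫ g (u(·+ξ) - u)`, which the
obstacle condition bounds below by `-(1/ε) ∫_A k m`. Since `g u` need not be integrable, the change
of variables is replaced by an ergodic argument for the measure-preserving map `e`. The integrand
`H = (g∘e⁻¹ - g) u + 1_A k m` dominates the coboundary `N - N∘e` of `N = (g∘e⁻¹) u`, and by Hopf's
maximal ergodic theorem `∫ H ≥ 0` as soon as the Birkhoff sums of `H` do not decrease linearly.
If they did along some orbit, `N` would grow linearly along it, and since `u∘eⁿ = o(n)` almost
everywhere, the nonnegative potential `g∘e⁻¹` would tend to `+∞` along it. Where `u ≠ 0` the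
increments of this potential are measurable, and by Poincaré recurrence for `e⁻¹` a nonnegative
function whose measurable increments sum to `+∞` along forward orbits can only do so on a null set.
-/

open MeasureTheory Set Filter
noncomputable section

/-- The d-dimensional torus. -/
abbrev Td (d : ℕ) : Type := Fin d → AddCircle (1 : ℝ)

open Topology ENNReal

variable {α : Type*}

section Orbit

variable {f : α → α} {x : α}

theorem apply_iterate_eq_add_birkhoffSum {G c : α → ℝ} :
    ∀ {n : ℕ}, (∀ k < n, G (f (f^[k] x)) = G (f^[k] x) + c (f^[k] x)) →
      G (f^[n] x) = G x + birkhoffSum f c n x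
  | 0, _ => by simp
  | n + 1, h => by
    rw [Function.iterate_succ_apply', h n n.lt_succ_self,
      apply_iterate_eq_add_birkhoffSum fun k hk => h k (hk.trans n.lt_succ_self),
      birkhoffSum_succ]
    ring

theorem sub_apply_iterate_le_birkhoffSum {N H : α → ℝ}
    (h : ∀ k, N (f^[k] x) - N (f (f^[k] x)) ≤ H (f^[k] x)) :
    ∀ n, N x - N (f^[n] x) ≤ birkhoffSum f H n x
  | 0 => by simp
  | n + 1 => by
    rw [Function.iterate_succ_apply', birkhoffSum_succ]
    linarith [h n, sub_apply_iterate_le_birkhoffSum h n]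

end Orbit

theorem tendsto_atTop_and_eventually_pos_of_le_mul {a b : ℕ → ℝ} {δ C : ℝ} (hδ : 0 < δ)
    (ha : ∀ n, 0 ≤ a n) (hab : ∀ n, δ * n + C ≤ a n * b n)
    (hb : Tendsto (fun n => b n / n) atTop (𝓝 0)) :
    Tendsto a atTop atTop ∧ ∀ᶠ n in atTop, 0 < b n := by
  have key (R : ℝ) (hR : 0 < R) : ∀ᶠ n in atTop, 0 < b n ∧ R ≤ a n := by
    have hsmall : ∀ᶠ n in atTop, b n / n < δ / (2 * R) :=
      (tendsto_order.1 hb).2 _ (by positivity)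
    have hlarge : ∀ᶠ n : ℕ in atTop, -2 * C / δ < n :=
      tendsto_natCast_atTop_atTop.eventually_gt_atTop _
    filter_upwards [hsmall, hlarge, eventually_gt_atTop 0] with n hsmall hlarge hn
    have hn : (0 : ℝ) < n := by exact_mod_cast hn
    rw [div_lt_iff₀ hn] at hsmall
    rw [div_lt_iff₀ hδ] at hlarge
    have hpos : 0 < a n * b n := by nlinarith [hab n]
    have hbpos : 0 < b n := pos_of_mul_pos_right hpos (ha n)
    refine ⟨hbpos, ?_⟩
    by_contra! haR
    have : a n * b n < δ * n / 2 :=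
      calc a n * b n ≤ R * b n := mul_le_mul_of_nonneg_right haR.le hbpos.le
        _ < R * (δ / (2 * R) * n) := mul_lt_mul_of_pos_left hsmall hR
        _ = δ * n / 2 := by field_simp
    nlinarith [hab n]
  refine ⟨tendsto_atTop.2 fun R => ?_, (key 1 one_pos).mono fun n hn => hn.1⟩
  exact (key (max R 1) (by positivity)).mono fun n hn => (le_max_left R 1).trans hn.2

theorem exists_iterate_tendsto_birkhoffSum_of_birkhoffSum_le {f : α → α} {G v c H : α → ℝ}
    {x : α} {δ : ℝ} (hδ : 0 < δ) (hG : ∀ n, 0 ≤ G (f^[n] x))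
    (hflux : ∀ n, G (f^[n] x) * v (f^[n] x) - G (f (f^[n] x)) * v (f (f^[n] x)) ≤ H (f^[n] x))
    (hrel : ∀ n, v (f^[n] x) ≠ 0 → G (f (f^[n] x)) = G (f^[n] x) + c (f^[n] x))
    (hv : Tendsto (fun n : ℕ => v (f^[n] x) / n) atTop (𝓝 0))
    (hH : ∀ n : ℕ, birkhoffSum f H n x ≤ -(n * δ)) :
    ∃ K, (∀ n, v (f^[n] (f^[K] x)) ≠ 0) ∧
      Tendsto (fun n => birkhoffSum f c n (f^[K] x)) atTop atTop := by
  have hgrow (n : ℕ) : δ * n + G x * v x ≤ G (f^[n] x) * v (f^[n] x) := by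
    linarith [sub_apply_iterate_le_birkhoffSum (N := fun y => G y * v y) hflux n, hH n]
  obtain ⟨hGtop, hvpos⟩ := tendsto_atTop_and_eventually_pos_of_le_mul hδ hG hgrow hv
  obtain ⟨K, hK⟩ := eventually_atTop.1 hvpos
  have hshift (n : ℕ) : f^[n] (f^[K] x) = f^[n + K] x := (Function.iterate_add_apply f n K x).symm
  refine ⟨K, fun n => by rw [hshift]; exact (hK _ (by omega)).ne', ?_⟩
  have hcoc (n : ℕ) : birkhoffSum f c n (f^[K] x) = G (f^[n + K] x) - G (f^[K] x) := by
    have := apply_iterate_eq_add_birkhoffSum (G := G) (c := c) (n := n) fun k _ => by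
      rw [hshift]; exact hrel _ (hK _ (by omega)).ne'
    rw [← hshift, this]
    ring
  simp_rw [hcoc]
  exact tendsto_atTop_add_const_right _ _ (hGtop.comp (tendsto_add_atTop_nat K))

/-- Garsia's recursion for `max (0, S₁ x, …, Sₙ x)`, where `Sₖ = birkhoffSum f g k`. -/
def birkhoffMax (f : α → α) (g : α → ℝ) : ℕ → α → ℝ
  | 0 => 0
  | n + 1 => fun x => max 0 (g x + birkhoffMax f g n (f x))

section BirkhoffMax

variable {f : α → α} {g : α → ℝ}

theorem birkhoffMax_nonneg : ∀ n x, 0 ≤ birkhoffMax f g n x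
  | 0, _ => le_rfl
  | _ + 1, _ => le_max_left _ _

theorem birkhoffMax_le_birkhoffMax_succ : ∀ n x, birkhoffMax f g n x ≤ birkhoffMax f g (n + 1) x
  | 0, x => birkhoffMax_nonneg 1 x
  | n + 1, x => max_le_max le_rfl (add_le_add le_rfl (birkhoffMax_le_birkhoffMax_succ n (f x)))

theorem birkhoffSum_le_birkhoffMax : ∀ n x, birkhoffSum f g n x ≤ birkhoffMax f g n x
  | 0, x => by simp [birkhoffMax]
  | n + 1, x => by
    rw [birkhoffSum_succ']
    exact (add_le_add le_rfl (birkhoffSum_le_birkhoffMax n (f x))).trans (le_max_right _ _)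

variable [MeasurableSpace α]

theorem Measurable.birkhoffMax (hf : Measurable f) (hg : Measurable g) :
    ∀ n, Measurable (birkhoffMax f g n)
  | 0 => measurable_const
  | n + 1 => measurable_const.max (hg.add ((Measurable.birkhoffMax hf hg n).comp hf))

theorem MeasureTheory.MeasurePreserving.integrable_birkhoffMax {μ : Measure α}
    (hf : MeasurePreserving f μ μ) (hg : Integrable g μ) : ∀ n, Integrable (birkhoffMax f g n) μ
  | 0 => integrable_zero _ _ _
  | n + 1 => (integrable_zero _ _ _).sup
      (hg.add (hf.integrable_comp_of_integrable (hf.integrable_birkhoffMax hg n)))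

end BirkhoffMax

variable [MeasurableSpace α] {μ : Measure α}

theorem Measurable.birkhoffSum {f : α → α} {g : α → ℝ} (hf : Measurable f) (hg : Measurable g)
    (n : ℕ) : Measurable (birkhoffSum f g n) :=
  Finset.measurable_sum _ fun k _ => hg.comp (hf.iterate k)

theorem tsum_measure_natCast_add_one_le_le_lintegral {w : α → ℝ} (hw : AEMeasurable w μ) :
    ∑' n : ℕ, μ {x | (n : ℝ) + 1 ≤ w x} ≤ ∫⁻ x, ENNReal.ofReal (w x) ∂μ := by
  have hmeas (n : ℕ) : NullMeasurableSet {x | (n : ℝ) + 1 ≤ w x} μ :=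
    nullMeasurableSet_le aemeasurable_const hw
  calc ∑' n : ℕ, μ {x | (n : ℝ) + 1 ≤ w x}
      = ∑' n : ℕ, ∫⁻ x, {x | (n : ℝ) + 1 ≤ w x}.indicator 1 x ∂μ := by
        simp_rw [lintegral_indicator_one₀ (hmeas _)]
    _ = ∫⁻ x, ∑' n : ℕ, {x | (n : ℝ) + 1 ≤ w x}.indicator 1 x ∂μ :=
        (lintegral_tsum fun n => aemeasurable_one.indicator₀ (hmeas n)).symm
    _ ≤ ∫⁻ x, ENNReal.ofReal (w x) ∂μ := by
        refine lintegral_mono fun x => ENNReal.tsum_le_of_sum_range_le fun N => ?_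
        simp only [indicator_apply, mem_ofPred_eq, Pi.one_apply]
        rw [Finset.sum_boole]
        calc (((Finset.range N).filter fun n : ℕ => (n : ℝ) + 1 ≤ w x).card : ℝ≥0∞)
            ≤ (Finset.range ⌊w x⌋₊).card := by
              refine Nat.cast_le.2 (Finset.card_le_card fun n hn => ?_)
              simp only [Finset.mem_filter, Finset.mem_range] at hn ⊢
              exact Nat.lt_of_succ_le (Nat.le_floor (by exact_mod_cast hn.2))
          _ ≤ ENNReal.ofReal (w x) := by
              rw [Finset.card_range, ← ENNReal.ofReal_natCast]
              rcases le_total 0 (w x) with hx | hx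
              · exact ENNReal.ofReal_le_ofReal (Nat.floor_le hx)
              · simp [Nat.floor_of_nonpos hx]

namespace MeasureTheory.MeasurePreserving

theorem ae_forall_iterate {f : α → α} (hf : MeasurePreserving f μ μ) {p : α → Prop}
    (h : ∀ᵐ x ∂μ, p x) : ∀ᵐ x ∂μ, ∀ n, p (f^[n] x) :=
  ae_all_iff.2 fun n => (hf.iterate n).quasiMeasurePreserving.ae h

theorem ae_eventually_abs_comp_iterate_lt {f : α → α} (hf : MeasurePreserving f μ μ) {v : α → ℝ}
    (hv : Integrable v μ) {c : ℝ} (hc : 0 < c) :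
    ∀ᵐ x ∂μ, ∀ᶠ n : ℕ in atTop, |v (f^[n] x)| < c * (n + 1) := by
  have hw : AEMeasurable (fun x => |v x| / c) μ := (hv.abs.div_const c).aemeasurable
  have hsum : ∑' n : ℕ, μ ((f^[n]) ⁻¹' {x | (n : ℝ) + 1 ≤ |v x| / c}) ≠ ∞ := by
    simp_rw [(hf.iterate _).measure_preimage (nullMeasurableSet_le aemeasurable_const hw)]
    exact ne_top_of_le_ne_top (hv.abs.div_const c).lintegral_lt_top.ne
      (tsum_measure_natCast_add_one_le_le_lintegral hw)
  filter_upwards [ae_eventually_notMem hsum] with x hx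
  filter_upwards [hx] with n hn
  simp only [mem_preimage, mem_ofPred_eq, not_le] at hn
  rwa [div_lt_iff₀ hc, mul_comm] at hn

theorem ae_tendsto_comp_iterate_div {f : α → α} (hf : MeasurePreserving f μ μ) {v : α → ℝ}
    (hv : Integrable v μ) : ∀ᵐ x ∂μ, Tendsto (fun n : ℕ => v (f^[n] x) / n) atTop (𝓝 0) := by
  have h := ae_all_iff.2 fun k : ℕ =>
    hf.ae_eventually_abs_comp_iterate_lt hv (Nat.one_div_pos_of_nat (n := k))
  filter_upwards [h] with x hx
  refine Metric.tendsto_nhds.2 fun ε hε => ?_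
  obtain ⟨k, hk⟩ := exists_nat_one_div_lt (half_pos hε)
  filter_upwards [hx k, eventually_ge_atTop 1] with n hvn hn
  have hn' : (1 : ℝ) ≤ n := by exact_mod_cast hn
  rw [Real.dist_eq, sub_zero, abs_div, Nat.abs_cast, div_lt_iff₀ (by positivity)]
  nlinarith

theorem integral_nonneg_of_ae_exists_birkhoffSum_pos {f : α → α} (hf : MeasurePreserving f μ μ)
    {g : α → ℝ} (hgm : Measurable g) (hg : Integrable g μ)
    (h : ∀ᵐ x ∂μ, ∃ n, 0 < birkhoffSum f g n x) : 0 ≤ ∫ x, g x ∂μ := by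
  set G := birkhoffMax f g
  have hGm := Measurable.birkhoffMax hf.measurable hgm
  have hGi := hf.integrable_birkhoffMax hg
  set E : ℕ → Set α := fun n => {x | 0 < g x + G n (f x)}
  have hEm (n : ℕ) : MeasurableSet (E n) :=
    measurableSet_lt measurable_const (hgm.add ((hGm n).comp hf.measurable))
  have hE_mono : Monotone E := monotone_nat_of_le_succ fun n x hx =>
    lt_of_lt_of_le hx (add_le_add le_rfl (birkhoffMax_le_birkhoffMax_succ n (f x)))
  have hE_int (n : ℕ) : 0 ≤ ∫ x in E n, g x ∂μ := by
    have hGf : Integrable (fun x => G n (f x)) μ := hf.integrable_comp_of_integrable (hGi n)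
    have hsucc : ∀ x ∈ E n, g x = G (n + 1) x - G n (f x) := fun x hx => by
      simp only [G, birkhoffMax, max_eq_right (le_of_lt (show 0 < g x + G n (f x) from hx))]
      ring
    have hsupp : ∫ x in E n, G (n + 1) x ∂μ = ∫ x, G (n + 1) x ∂μ :=
      setIntegral_eq_integral_of_forall_compl_eq_zero fun x hx => max_eq_left (not_lt.1 hx)
    have hcomp : ∫ x, G n (f x) ∂μ = ∫ x, G n x ∂μ := by
      rw [← integral_map hf.aemeasurable (hGm n).aestronglyMeasurable, hf.map_eq]
    rw [setIntegral_congr_fun (hEm n) hsucc, integral_sub (hGi _).integrableOn hGf.integrableOn,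
      hsupp]
    linarith [setIntegral_le_integral (s := E n) hGf
        (Eventually.of_forall fun x => birkhoffMax_nonneg n (f x)),
      integral_mono (hGi n) (hGi (n + 1)) (birkhoffMax_le_birkhoffMax_succ n)]
  have hcover : ∀ᵐ x ∂μ, x ∈ ⋃ n, E n := by
    filter_upwards [h] with x ⟨n, hn⟩
    rcases n with _ | n
    · simp at hn
    · refine mem_iUnion.2 ⟨n, ?_⟩
      rw [birkhoffSum_succ'] at hn
      exact hn.trans_le (add_le_add le_rfl (birkhoffSum_le_birkhoffMax n (f x)))
  have hlim := tendsto_setIntegral_of_monotone hEm hE_mono hg.integrableOn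
  rw [setIntegral_congr_set (ae_eq_univ.2 (ae_iff.1 hcover)), setIntegral_univ] at hlim
  exact ge_of_tendsto' hlim hE_int

variable [IsFiniteMeasure μ]

theorem integral_nonneg_of_ae_exists_birkhoffSum_gt {f : α → α} (hf : MeasurePreserving f μ μ)
    {g : α → ℝ} (hg : Integrable g μ)
    (h : ∀ δ > 0, ∀ᵐ x ∂μ, ∃ n : ℕ, -(n * δ) < birkhoffSum f g n x) : 0 ≤ ∫ x, g x ∂μ := by
  obtain ⟨g₀, hg₀m, hgg₀⟩ := hg.aemeasurable
  have hg₀ : Integrable g₀ μ := hg.congr hgg₀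
  have hsum := ae_all_iff.2 (hf.quasiMeasurePreserving.birkhoffSum_ae_eq_of_ae_eq hgg₀)
  have hδ (δ : ℝ) (hδ : 0 < δ) : 0 ≤ ∫ x, g x ∂μ + δ * μ.real univ := by
    have := hf.integral_nonneg_of_ae_exists_birkhoffSum_pos (hg₀m.add_const δ)
      (hg₀.add (integrable_const δ)) ?_
    · rwa [integral_add hg₀ (integrable_const δ), integral_const, smul_eq_mul, mul_comm,
        ← integral_congr_ae hgg₀] at this
    filter_upwards [h δ hδ, hsum] with x ⟨n, hn⟩ hx
    refine ⟨n, ?_⟩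
    have hshift : birkhoffSum f (fun x => g₀ x + δ) n x = birkhoffSum f g n x + n * δ := by
      rw [hx n]; simp [birkhoffSum, Finset.sum_add_distrib]
    linarith
  refine le_of_forall_pos_le_add fun ε hε => ?_
  have hc : 0 ≤ μ.real univ := measureReal_nonneg
  have := hδ (ε / (μ.real univ + 1)) (by positivity)
  have : ε / (μ.real univ + 1) * μ.real univ ≤ ε := by
    rw [div_mul_eq_mul_div, div_le_iff₀ (by positivity)]; nlinarith
  linarith

variable {e : α ≃ᵐ α}

theorem ae_forall_iterate_symm_mem (he : MeasurePreserving e μ μ) {S : Set α}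
    (hS : MeasurableSet S) (hSe : MapsTo e S S) :
    ∀ᵐ x ∂μ, x ∈ S → ∀ n, e.symm^[n] x ∈ S := by
  filter_upwards [he.symm.conservative.ae_mem_imp_frequently_image_mem hS.nullMeasurableSet]
    with x hx hxS n
  obtain ⟨m, hm, hmS⟩ := (frequently_atTop.1 (hx hxS)) n
  obtain ⟨j, rfl⟩ := Nat.exists_eq_add_of_le hm
  rw [add_comm, Function.iterate_add_apply] at hmS
  have hinv : Function.LeftInverse e e.symm := e.apply_symm_apply
  simpa only [hinv.iterate j _] using hSe.iterate j hmS

theorem measure_eq_zero_of_tendsto_birkhoffSum (he : MeasurePreserving e μ μ) {S : Set α}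
    (hS : MeasurableSet S) (hSe : MapsTo e S S) {G c : α → ℝ} (hc : Measurable c)
    (hG : ∀ x ∈ S, 0 ≤ G x) (hGc : ∀ᵐ x ∂μ, x ∈ S → G (e x) = G x + c x)
    (htend : ∀ x ∈ S, Tendsto (fun n => birkhoffSum e c n x) atTop atTop) : μ S = 0 := by
  -- Along the backward orbit of a.e. `x ∈ S`, `G ≥ 0` bounds the sums of `c` ending at `x` by
  -- `G x`; by invariance of `μ` the set `B R` of such `x` is no larger than `S ∩ {Sₙ c ≤ R}`.
  set B : ℕ → Set α := fun R =>
    {x | ∀ n, e.symm^[n] x ∈ S ∧ birkhoffSum e c n (e.symm^[n] x) ≤ R}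
  have hcover : S ≤ᵐ[μ] ⋃ R : ℕ, B R := by
    have hrel : ∀ᵐ x ∂μ, ∀ n k, e^[k] (e.symm^[n] x) ∈ S →
        G (e (e^[k] (e.symm^[n] x))) = G (e^[k] (e.symm^[n] x)) + c (e^[k] (e.symm^[n] x)) :=
      ae_all_iff.2 fun n => ae_all_iff.2 fun k =>
        ((he.iterate k).comp (he.symm.iterate n)).quasiMeasurePreserving.ae hGc
    filter_upwards [he.ae_forall_iterate_symm_mem hS hSe, hrel] with x hback hrel hxS
    refine mem_iUnion.2 ⟨⌈G x⌉₊, fun n => ⟨hback hxS n, ?_⟩⟩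
    have hcoc := apply_iterate_eq_add_birkhoffSum (n := n) fun k _ =>
      hrel n k (hSe.iterate k (hback hxS n))
    rw [(Function.LeftInverse.iterate e.apply_symm_apply n) x] at hcoc
    linarith [hG _ (hback hxS n), Nat.le_ceil (G x)]
  have hB (R : ℕ) : μ (B R) = 0 := by
    set T : ℕ → Set α := fun n => S ∩ {x | birkhoffSum e c n x ≤ R}
    have hTm (n : ℕ) : MeasurableSet (T n) :=
      hS.inter (measurableSet_le (he.measurable.birkhoffSum hc n) measurable_const)
    have hT : Tendsto (fun n => μ (T n)) atTop (𝓝 (μ ∅)) := by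
      refine tendsto_measure_of_tendsto_indicator_of_isFiniteMeasure atTop μ hTm fun x => ?_
      by_cases hx : x ∈ S
      · filter_upwards [(htend x hx).eventually_gt_atTop (R : ℝ)] with n hn
        simp [T, hn]
      · exact Eventually.of_forall fun n => by simp [T, hx]
    rw [measure_empty] at hT
    refine le_antisymm (ge_of_tendsto' hT fun n => ?_) zero_le
    calc μ (B R) ≤ μ ((e.symm^[n]) ⁻¹' T n) := measure_mono fun x hx => hx n
      _ = μ (T n) := (he.symm.iterate n).measure_preimage (hTm n).nullMeasurableSet
  exact measure_mono_null_ae hcover (measure_iUnion_null hB)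

theorem measure_setOf_forall_ne_zero_and_tendsto_eq_zero (he : MeasurePreserving e μ μ)
    {v c G : α → ℝ} (hv : Measurable v) (hc : Measurable c) (hG : ∀ x, 0 ≤ G x)
    (hGc : ∀ᵐ x ∂μ, v x ≠ 0 → G (e x) = G x + c x) :
    μ {x | (∀ n, v (e^[n] x) ≠ 0) ∧ Tendsto (fun n => birkhoffSum e c n x) atTop atTop} = 0 := by
  refine he.measure_eq_zero_of_tendsto_birkhoffSum ?_ ?_ hc (fun x _ => hG x) ?_
    fun x hx => hx.2
  · simp only [ofPred_and, ofPred_forall]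
    exact (MeasurableSet.iInter fun n => (measurableSet_singleton 0).compl.preimage
      (hv.comp (he.measurable.iterate n))).inter
      (measurableSet_tendsto _ fun n => he.measurable.birkhoffSum hc n)
  · rintro x ⟨hx₀, hxc⟩
    refine ⟨fun n => ?_, ?_⟩
    · rw [← Function.iterate_succ_apply]; exact hx₀ _
    · refine (tendsto_atTop_add_const_right _ (-c x)
        (hxc.comp (tendsto_add_atTop_nat 1))).congr fun n => ?_
      simp only [Function.comp_apply, birkhoffSum_succ']
      ring
  · filter_upwards [hGc] with x hx hxS using hx (hxS.1 0)

theorem integral_symm_mul_sub_add_integral_nonneg (he : MeasurePreserving e μ μ) {g v P : α → ℝ}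
    (hg : ∀ x, 0 ≤ g x) (hv : Integrable v μ) (hP : Integrable P μ)
    (hobst : ∀ᵐ x ∂μ, g x * v x ≤ P x + g x * v (e x))
    (hF : Integrable (fun x => g (e.symm x) * v x - g x * v x) μ) :
    0 ≤ ∫ x, (g (e.symm x) * v x - g x * v x) ∂μ + ∫ x, P x ∂μ := by
  rw [← integral_add hF hP]
  refine he.integral_nonneg_of_ae_exists_birkhoffSum_gt (hF.add hP) fun δ hδ => ?_
  obtain ⟨v₀, hv₀m, hvv₀⟩ := hv.aemeasurable
  obtain ⟨F₀, hF₀m, hFF₀⟩ := hF.aemeasurable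
  set c : α → ℝ := fun x => -(F₀ x / v₀ x)
  have hc : Measurable c := (hF₀m.div hv₀m).neg
  have hflux : ∀ᵐ x ∂μ, g (e.symm x) * v₀ x - g (e.symm (e x)) * v₀ (e x) ≤
      g (e.symm x) * v x - g x * v x + P x := by
    filter_upwards [hobst, hvv₀, he.quasiMeasurePreserving.ae hvv₀] with x hx h₀ h₁
    rw [e.symm_apply_apply, ← h₀, ← h₁]
    linarith
  have hrel : ∀ᵐ x ∂μ, v₀ x ≠ 0 → g (e.symm (e x)) = g (e.symm x) + c x := by
    filter_upwards [hvv₀, hFF₀] with x h₀ hF₀ hx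
    rw [e.symm_apply_apply, show c x = -(F₀ x / v₀ x) from rfl, ← hF₀, h₀]
    field_simp
    ring
  have hS := he.measure_setOf_forall_ne_zero_and_tendsto_eq_zero hv₀m hc
    (G := fun x => g (e.symm x)) (fun x => hg _) hrel
  filter_upwards [he.ae_forall_iterate (hflux.and (hrel.and (measure_eq_zero_iff_ae_notMem.1 hS))),
    he.ae_tendsto_comp_iterate_div (hv.congr hvv₀)] with x hx hlim
  by_contra! hbad
  obtain ⟨K, hK⟩ := exists_iterate_tendsto_birkhoffSum_of_birkhoffSum_le
    (G := fun x => g (e.symm x)) hδ (fun n => hg _) (fun n => (hx n).1) (fun n => (hx n).2.1)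
    hlim hbad
  exact (hx K).2.2 hK

end MeasureTheory.MeasurePreserving

theorem ae_indicator_mul_le_of_ae_restrict {A : Set α} (hA : MeasurableSet A) {m k v w : α → ℝ}
    (hm : ∀ x ∈ A, 0 ≤ m x) (h : ∀ᵐ x ∂μ.restrict A, v x ≤ k x + w x) :
    ∀ᵐ x ∂μ,
      A.indicator m x * v x ≤ A.indicator (fun x => k x * m x) x + A.indicator m x * w x := by
  filter_upwards [(ae_restrict_iff' hA).1 h] with x hx
  by_cases hxA : x ∈ A
  · simp only [indicator_of_mem hxA]
    linarith [mul_le_mul_of_nonneg_left (hx hxA) (hm x hxA)]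
  · simp [indicator_of_notMem hxA]

theorem isFiniteMeasure_restrict_Ioo_prod_univ {β : Type*} [MeasurableSpace β] (ν : Measure β)
    [IsFiniteMeasure ν] (a b : ℝ) : IsFiniteMeasure ((volume.prod ν).restrict (Ioo a b ×ˢ univ)) :=
  isFiniteMeasure_restrict.2 <| by
    rw [Measure.prod_prod]
    exact ENNReal.mul_ne_top (by simp) (measure_ne_top _ _)

theorem measurePreserving_prodCongr_addRight_restrict {β γ : Type*} [MeasurableSpace β]
    [MeasurableSpace γ] [AddGroup γ] [MeasurableAdd γ] (μ : Measure β) (ν : Measure γ)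
    [SFinite μ] [SFinite ν] [ν.IsAddRightInvariant] (s : Set β) (ξ : γ) :
    MeasurePreserving ((MeasurableEquiv.refl β).prodCongr (MeasurableEquiv.addRight ξ))
      ((μ.prod ν).restrict (s ×ˢ univ)) ((μ.prod ν).restrict (s ×ˢ univ)) := by
  set e := (MeasurableEquiv.refl β).prodCongr (MeasurableEquiv.addRight ξ)
  have he : MeasurePreserving e (μ.prod ν) (μ.prod ν) :=
    (MeasurePreserving.id μ).prod (measurePreserving_add_right ν ξ)
  have hpre : e ⁻¹' (s ×ˢ univ) = s ×ˢ univ := ext fun p => Iff.rfl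
  simpa only [hpre] using he.restrict_preimage_emb e.measurableEmbedding (s ×ˢ univ)

theorem stmt0_general {d : ℕ} (T ν ε : ℝ) (hε : 0 < ε)
    (ξ : Td d) (A : Set (ℝ × Td d)) (hA : MeasurableSet A)
    (m u : ℝ → Td d → ℝ) (k : Td d → ℝ)
    (dtm lapm : ℝ → Td d → ℝ)
    (hm_nonneg : ∀ t x, 0 ≤ m t x)
    -- the penalized PDE on (0,T) × T^d
    (hPDE : ∀ t ∈ Ioo (0 : ℝ) T, ∀ x : Td d,
      dtm t x - ν * lapm t x
        + (1 / ε) * (A.indicator (fun p : ℝ × Td d => m p.1 p.2) (t, x))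
        - (1 / ε) * (A.indicator (fun p : ℝ × Td d => m p.1 p.2) (t, x - ξ)) = 0)
    -- k ≥ 0 on A
    (hk : ∀ p ∈ A, 0 ≤ k p.2)
    -- integrability (u ∈ L²((0,T),H¹), ∂_t u ∈ L²((0,T),H⁻¹))
    (hu_mem : MemLp (fun p : ℝ × Td d => u p.1 p.2) 2
      (volume.restrict (Ioo (0 : ℝ) T ×ˢ (univ : Set (Td d)))))
    (hint1 : IntegrableOn (fun p : ℝ × Td d =>
      (dtm p.1 p.2 - ν * lapm p.1 p.2) * u p.1 p.2)
      (Ioo (0 : ℝ) T ×ˢ (univ : Set (Td d))))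
    (hint2 : IntegrableOn (fun p : ℝ × Td d => k p.2 * m p.1 p.2) A)
    -- the obstacle condition a.e. on A
    (hobst : ∀ᵐ p ∂(volume.restrict A), u p.1 p.2 ≤ k p.2 + u p.1 (p.2 + ξ)) :
    0 ≤ (∫ p in Ioo (0 : ℝ) T ×ˢ (univ : Set (Td d)),
          (dtm p.1 p.2 - ν * lapm p.1 p.2) * u p.1 p.2)
        + (1 / ε) * ∫ p in A, k p.2 * m p.1 p.2 := by
  set Ω : Set (ℝ × Td d) := Ioo (0 : ℝ) T ×ˢ univ
  set μ : Measure (ℝ × Td d) := volume.restrict Ω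
  have : IsFiniteMeasure μ := isFiniteMeasure_restrict_Ioo_prod_univ volume 0 T
  set e : (ℝ × Td d) ≃ᵐ (ℝ × Td d) :=
    (MeasurableEquiv.refl ℝ).prodCongr (MeasurableEquiv.addRight ξ)
  have he : MeasurePreserving e μ μ := measurePreserving_prodCongr_addRight_restrict _ _ _ ξ
  set g : ℝ × Td d → ℝ := A.indicator fun p => m p.1 p.2
  set P : ℝ × Td d → ℝ := A.indicator fun p => k p.2 * m p.1 p.2
  have hPDE' : ∀ p ∈ Ω, (dtm p.1 p.2 - ν * lapm p.1 p.2) * u p.1 p.2 =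
      1 / ε * (g (e.symm p) * u p.1 p.2 - g p * u p.1 p.2) := by
    rintro ⟨t, x⟩ ⟨ht, -⟩
    rw [show e.symm (t, x) = (t, x - ξ) by rw [sub_eq_add_neg]; rfl]
    linear_combination u t x * hPDE t ht x
  have hF : Integrable (fun p => g (e.symm p) * u p.1 p.2 - g p * u p.1 p.2) μ := by
    refine ((hint1.congr_fun hPDE' (measurableSet_Ioo.prod .univ)).const_mul ε).congr
      (Eventually.of_forall fun p => ?_)
    field_simp
  have hP : Integrable P volume := (integrable_indicator_iff hA).2 hint2
  have key := he.integral_symm_mul_sub_add_integral_nonneg (v := fun p => u p.1 p.2)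
    (fun p => indicator_nonneg (fun p _ => hm_nonneg p.1 p.2) p) (hu_mem.integrable one_le_two)
    hP.restrict (ae_restrict_of_ae (ae_indicator_mul_le_of_ae_restrict hA
      (m := fun p => m p.1 p.2) (w := fun p => u p.1 (p.2 + ξ)) (fun p _ => hm_nonneg _ _) hobst))
    hF
  have hPμ : ∫ p, P p ∂μ ≤ ∫ p in A, k p.2 * m p.1 p.2 := by
    rw [← integral_indicator hA]
    exact setIntegral_le_integral hP (Eventually.of_forall fun p =>
      indicator_nonneg (fun p hp => mul_nonneg (hk p hp) (hm_nonneg _ _)) p)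
  rw [setIntegral_congr_fun (measurableSet_Ioo.prod .univ) hPDE', integral_const_mul]
  have hε' : 0 < 1 / ε := by positivity
  nlinarith [mul_nonneg hε'.le key, mul_le_mul_of_nonneg_left hPμ hε'.le]

/-- If `m ≥ 0` solves, on `(0,T) × T^d`, the penalized equation
`∂_t m − νΔm + (1/ε)·1_A·m − (1/ε)(1_A m)(t, x−ξ) = 0`, `k ≥ 0` on `A`, and
`u` (in `L²((0,T),H¹)` with `∂_t u ∈ L²((0,T),H⁻¹)`) satisfies the single-jump
obstacle condition `u(t,x) ≤ k(x) + u(t,x+ξ)` a.e. on `A`, then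
`∫∫ (∂_t m − νΔm) u + (1/ε) ∫_A k m ≥ 0`.  The time derivative `dtm` and the
Laplacian `lapm` of `m` are given as data. -/
theorem stmt0 {d : ℕ} (T ν ε : ℝ) (hT : 0 < T) (hν : 0 < ν) (hε : 0 < ε)
    (ξ : Td d) (A : Set (ℝ × Td d)) (hA : MeasurableSet A)
    (m u : ℝ → Td d → ℝ) (k : Td d → ℝ)
    (dtm lapm : ℝ → Td d → ℝ)
    (hm_nonneg : ∀ t x, 0 ≤ m t x)
    -- the penalized PDE on (0,T) × T^d
    (hPDE : ∀ t ∈ Ioo (0 : ℝ) T, ∀ x : Td d,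
      dtm t x - ν * lapm t x
        + (1 / ε) * (A.indicator (fun p : ℝ × Td d => m p.1 p.2) (t, x))
        - (1 / ε) * (A.indicator (fun p : ℝ × Td d => m p.1 p.2) (t, x - ξ)) = 0)
    -- k ≥ 0 on A
    (hk : ∀ p ∈ A, 0 ≤ k p.2)
    -- integrability (u ∈ L²((0,T),H¹), ∂_t u ∈ L²((0,T),H⁻¹))
    (hu_mem : MemLp (fun p : ℝ × Td d => u p.1 p.2) 2
      (volume.restrict (Ioo (0 : ℝ) T ×ˢ (univ : Set (Td d)))))
    (hint1 : IntegrableOn (fun p : ℝ × Td d =>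
      (dtm p.1 p.2 - ν * lapm p.1 p.2) * u p.1 p.2)
      (Ioo (0 : ℝ) T ×ˢ (univ : Set (Td d))))
    (hint2 : IntegrableOn (fun p : ℝ × Td d => k p.2 * m p.1 p.2) A)
    -- the obstacle condition a.e. on A
    (hobst : ∀ᵐ p ∂(volume.restrict A), u p.1 p.2 ≤ k p.2 + u p.1 (p.2 + ξ)) :
    0 ≤ (∫ p in Ioo (0 : ℝ) T ×ˢ (univ : Set (Td d)),
          (dtm p.1 p.2 - ν * lapm p.1 p.2) * u p.1 p.2)
        + (1 / ε) * ∫ p in A, k p.2 * m p.1 p.2 :=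
  stmt0_general T ν ε hε ξ A hA m u k dtm lapm hm_nonneg hPDE hk hu_mem hint1 hint2 hobst
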